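/- arXiv:1504.05534 — 2 statements merged into one kernel-verified Lean document; each statement's English description precedes it below -/
import Mathlib

section
/- Let V be a d-dimensional ℚ-vector space with a symmetric bilinear form of signature (1, d−1), and {H_j}_{j∈J} a family of nonzero pairwise-orthogonal vectors with J₊, J₋, J₀ defined by the sign of H_j·H_j. If #(J₊ ∪ J₀) ≥ 2, then J₊ is empty, #J₋ ≤ d − 2, and #J₀ ≥ #J − (d − 2). -/
/-!
If `B x x > 0`, `y ≠ 0`, `B y y ≥ 0` and `x ⊥ y`, then `(B M y) • x - (B M x) • y` lies in `M^⊥`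
but has positive square, which is impossible. So two nonnegative `H j` force every `H j` to be
nonpositive. An isotropic `H j₀` together with the negative `H j` is then linearly independent and
spans a subspace on which `B ≤ 0`; this subspace misses `M`, so it has dimension `< d`.
-/

namespace LinearMap.BilinForm

variable {K V : Type*} [Field K] [AddCommGroup V] [Module K V] {B : LinearMap.BilinForm K V}

section Orthogonal

variable {ι : Type*} [Fintype ι] {v : ι → V}

theorem iIsOrtho.apply_sum_smul_left (hv : B.iIsOrtho v) (c : ι → K) (j : ι) :
    B (∑ i, c i • v i) (v j) = c j * B (v j) (v j) := by
  rw [sum_left, Fintype.sum_eq_single j fun i hij ↦ by rw [smul_left, hv hij, mul_zero],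
    smul_left]

theorem iIsOrtho.apply_sum_smul_sum_smul (hv : B.iIsOrtho v) (c : ι → K) :
    B (∑ i, c i • v i) (∑ i, c i • v i) = ∑ i, c i ^ 2 * B (v i) (v i) := by
  simp only [sum_right, smul_right, hv.apply_sum_smul_left, ← mul_assoc, sq]

theorem iIsOrtho.linearIndependent_of_ne_zero (hv : B.iIsOrtho v) {i₀ : ι} (hi₀ : v i₀ ≠ 0)
    (hvv : ∀ i ≠ i₀, B (v i) (v i) ≠ 0) : LinearIndependent K v := by
  rw [Fintype.linearIndependent_iff]
  intro c hc
  have hc_ne : ∀ i ≠ i₀, c i = 0 := fun i hi ↦ by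
    simpa [hc, hvv i hi] using (hv.apply_sum_smul_left c i).symm
  have hc₀ : c i₀ • v i₀ = 0 := by
    rwa [Fintype.sum_eq_single i₀ fun i hi ↦ by rw [hc_ne i hi, zero_smul]] at hc
  intro i
  by_cases hi : i = i₀
  · subst hi
    exact (smul_eq_zero.mp hc₀).resolve_right hi₀
  · exact hc_ne i hi

end Orthogonal

section Hyperbolic

variable [LinearOrder K] [IsStrictOrderedRing K] {M : V}

theorem apply_self_nonpos_of_isOrtho (hneg : ∀ v, B M v = 0 → v ≠ 0 → B v v < 0) {x y : V}
    (hy : y ≠ 0) (hyy : 0 ≤ B y y) (hxy : B x y = 0) (hyx : B y x = 0) : B x x ≤ 0 := by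
  by_contra! hxx
  have hMy : B M y ≠ 0 := fun h ↦ not_le_of_gt (hneg y h hy) hyy
  set v := B M y • x - B M x • y
  have hMv : B M v = 0 := by simp only [v, map_sub, map_smul, smul_eq_mul]; ring
  have hvv : B v v = B M y ^ 2 * B x x + B M x ^ 2 * B y y := by
    simp only [v, map_sub, map_smul, LinearMap.sub_apply, LinearMap.smul_apply, smul_eq_mul,
      hxy, hyx]
    ring
  have hvv_pos : 0 < B v v := by rw [hvv]; positivity
  by_cases hv : v = 0
  · simp [hv] at hvv_pos
  · exact lt_asymm hvv_pos (hneg v hMv hv)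

theorem card_lt_finrank_of_iIsOrtho [FiniteDimensional K V] (hM : 0 < B M M) {ι : Type*}
    [Finite ι] {v : ι → V} (hv : B.iIsOrtho v) (hli : LinearIndependent K v)
    (hvv : ∀ i, B (v i) (v i) ≤ 0) : Nat.card ι < Module.finrank K V := by
  have := Fintype.ofFinite ι
  have hM_notMem : M ∉ Submodule.span K (Set.range v) := by
    rintro hmem
    obtain ⟨c, rfl⟩ := (Submodule.mem_span_range_iff_exists_fun K).mp hmem
    rw [hv.apply_sum_smul_sum_smul] at hM
    exact not_le_of_gt hM
      (Finset.sum_nonpos fun i _ ↦ mul_nonpos_of_nonneg_of_nonpos (sq_nonneg _) (hvv i))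
  rw [Nat.card_eq_fintype_card, ← finrank_span_eq_card hli]
  exact Submodule.finrank_lt fun h ↦ hM_notMem (h ▸ Submodule.mem_top)

theorem ncard_setOf_apply_self_neg_add_two_le_finrank [FiniteDimensional K V] (hM : 0 < B M M)
    {ι : Type*} [Finite ι] {v : ι → V} (hv : B.iIsOrtho v) (hvv : ∀ i, B (v i) (v i) ≤ 0)
    {i₀ : ι} (hi₀ : v i₀ ≠ 0) (hvi₀ : B (v i₀) (v i₀) = 0) :
    {i | B (v i) (v i) < 0}.ncard + 2 ≤ Module.finrank K V := by
  set S := {i | B (v i) (v i) < 0}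
  have hi₀S : i₀ ∉ S := fun h ↦ h.ne hvi₀
  have hvT : B.iIsOrtho fun i : ↥(insert i₀ S) ↦ v i :=
    fun i j hij ↦ hv (Subtype.coe_ne_coe.mpr hij)
  have hli : LinearIndependent K fun i : ↥(insert i₀ S) ↦ v i := by
    have := Fintype.ofFinite ↥(insert i₀ S)
    refine hvT.linearIndependent_of_ne_zero (i₀ := ⟨i₀, Set.mem_insert _ _⟩) hi₀ fun i hi ↦ ?_
    exact ((Set.mem_insert_iff.mp i.2).resolve_left (Subtype.coe_ne_coe.mpr hi)).ne
  have hT := card_lt_finrank_of_iIsOrtho hM hvT hli fun i ↦ hvv i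
  rwa [Nat.card_coe_set_eq, Set.ncard_insert_of_notMem hi₀S] at hT

end Hyperbolic

end LinearMap.BilinForm

open LinearMap.BilinForm

theorem disjoint_divisors_hodge_index_two_nonneg_general
    {V : Type*} [AddCommGroup V] [Module ℚ V] [Module.Finite ℚ V] (d : ℕ)
    (hdim : Module.finrank ℚ V = d)
    (B : LinearMap.BilinForm ℚ V)
    (M : V) (hM : 0 < B M M)
    (hneg : ∀ v : V, B M v = 0 → v ≠ 0 → B v v < 0)
    {J : Type*} [Fintype J] (H : J → V) (hne : ∀ j, H j ≠ 0)
    (horth : ∀ j j' : J, j ≠ j' → B (H j) (H j') = 0)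
    (h2 : 2 ≤ ({j : J | 0 < B (H j) (H j)} ∪ {j : J | B (H j) (H j) = 0}).ncard) :
    {j : J | 0 < B (H j) (H j)} = ∅ ∧
    {j : J | B (H j) (H j) < 0}.ncard ≤ d - 2 ∧
    Fintype.card J - (d - 2) ≤ {j : J | B (H j) (H j) = 0}.ncard := by
  have hnonneg : 2 ≤ {j | 0 ≤ B (H j) (H j)}.ncard := by
    convert h2 using 2
    ext j
    simp [le_iff_lt_or_eq, eq_comm]
  have hnonpos (j : J) : B (H j) (H j) ≤ 0 := by
    obtain ⟨j', hj', hj'j⟩ := Set.exists_ne_of_one_lt_ncard hnonneg j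
    exact apply_self_nonpos_of_isOrtho hneg (hne j') hj' (horth j j' hj'j.symm) (horth j' j hj'j)
  obtain ⟨j₀, hj₀ : 0 ≤ B (H j₀) (H j₀)⟩ :=
    Set.nonempty_of_ncard_ne_zero (by omega : {j | 0 ≤ B (H j) (H j)}.ncard ≠ 0)
  have hneg_card := hdim ▸ ncard_setOf_apply_self_neg_add_two_le_finrank hM horth hnonpos
    (hne j₀) (le_antisymm (hnonpos j₀) hj₀)
  have hzero : {j | B (H j) (H j) = 0} = {j | B (H j) (H j) < 0}ᶜ := by
    ext j
    simp [(hnonpos j).lt_iff_ne]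
  have hcard := Set.ncard_add_ncard_compl {j | B (H j) (H j) < 0}
  rw [Nat.card_eq_fintype_card] at hcard
  refine ⟨Set.eq_empty_of_forall_notMem fun j ↦ not_lt.mpr (hnonpos j), by omega, ?_⟩
  rw [hzero]
  omega

/-- Hodge-index linear algebra: if at least two of the pairwise-orthogonal nonzero vectors
have nonnegative self-pairing, then none has positive self-pairing, at most `d - 2` have
negative self-pairing, and at least `#J - (d - 2)` have self-pairing zero. -/
theorem disjoint_divisors_hodge_index_two_nonneg
    {V : Type*} [AddCommGroup V] [Module ℚ V] [Module.Finite ℚ V] (d : ℕ)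
    (hdim : Module.finrank ℚ V = d)
    (B : LinearMap.BilinForm ℚ V) (hsymm : ∀ v w : V, B v w = B w v)
    (M : V) (hM : 0 < B M M)
    (hneg : ∀ v : V, B M v = 0 → v ≠ 0 → B v v < 0)
    {J : Type*} [Fintype J] (H : J → V) (hne : ∀ j, H j ≠ 0)
    (horth : ∀ j j' : J, j ≠ j' → B (H j) (H j') = 0)
    (h2 : 2 ≤ ({j : J | 0 < B (H j) (H j)} ∪ {j : J | B (H j) (H j) = 0}).ncard) :
    {j : J | 0 < B (H j) (H j)} = ∅ ∧
    {j : J | B (H j) (H j) < 0}.ncard ≤ d - 2 ∧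
    Fintype.card J - (d - 2) ≤ {j : J | B (H j) (H j) = 0}.ncard :=
  disjoint_divisors_hodge_index_two_nonneg_general d hdim B M hM hneg H hne horth h2
end

section
/- Let k be a field and consider the polynomials f₀ = z, f₁ = y z² + 1 in k[y,z], and recursively fₙ = aₙ·z^{dₙ−1} + ∏_{i=1}^{n−1} f_i for n ≥ 2, where aₙ ∈ k are nonzero and dₙ = ∑_{i=1}^{n−1} deg_z(f_i). Then for all 1 ≤ i < n, the zero sets V(f_i) and V(fₙ) in 𝔸²(k̄) are disjoint, i.e. the system f_i(y,z) = 0, fₙ(y,z) = 0 has no solution in k̄². -/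
open MvPolynomial

lemma deg_f1_ge {K : Type*} [Field K] :
    2 ≤ (X 0 * X 1 ^ 2 + 1 : MvPolynomial (Fin 2) K).degreeOf 1 := by
  set m : Fin 2 →₀ ℕ := Finsupp.single 0 1 + Finsupp.single 1 2 with hm
  have hm1 : m 1 = 2 := by simp [hm]
  have hmem : m ∈ (X 0 * X 1 ^ 2 + 1 : MvPolynomial (Fin 2) K).support := by
    rw [MvPolynomial.mem_support_iff]
    have : (X 0 * X 1 ^ 2 : MvPolynomial (Fin 2) K) = monomial m 1 := by
      rw [X_pow_eq_monomial, X, monomial_mul, one_mul, hm]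
    rw [coeff_add, this, coeff_monomial, if_pos rfl, coeff_one, if_neg]
    · norm_num
    · intro h
      rw [← h] at hm1
      simp at hm1
  have := monomial_le_degreeOf 1 hmem
  omega

/-- The members of the recursive family `f₀ = z`, `f₁ = y z² + 1`,
`fₙ = aₙ z^{dₙ-1} + ∏_{i=1}^{n-1} f_i` (with `aₙ ≠ 0` and
`dₙ = ∑_{i=1}^{n-1} deg_z f_i`) have pairwise disjoint zero sets over an algebraically
closed field: for `1 ≤ i < n` the system `f_i = fₙ = 0` has no solution.
Variables: `y = X 0`, `z = X 1`. -/
theorem recursive_family_zero_sets_disjoint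
    {K : Type*} [Field K] [IsAlgClosed K]
    (f : ℕ → MvPolynomial (Fin 2) K) (a : ℕ → K) (d : ℕ → ℕ)
    (hf0 : f 0 = X 1)
    (hf1 : f 1 = X 0 * X 1 ^ 2 + 1)
    (hd : ∀ n, 2 ≤ n → d n = ∑ i ∈ Finset.Ico 1 n, (f i).degreeOf 1)
    (ha : ∀ n, 2 ≤ n → a n ≠ 0)
    (hf : ∀ n, 2 ≤ n →
      f n = C (a n) * X 1 ^ (d n - 1) + ∏ i ∈ Finset.Ico 1 n, f i) :
    ∀ i n : ℕ, 1 ≤ i → i < n →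
      ∀ P : Fin 2 → K, ¬ (eval P (f i) = 0 ∧ eval P (f n) = 0) := by
  -- d n ≥ 2 for n ≥ 2
  have hd2 : ∀ n, 2 ≤ n → 2 ≤ d n := by
    intro n hn
    rw [hd n hn]
    calc (2 : ℕ) ≤ (f 1).degreeOf 1 := by rw [hf1]; exact deg_f1_ge
      _ ≤ ∑ i ∈ Finset.Ico 1 n, (f i).degreeOf 1 :=
        Finset.single_le_sum (f := fun i => (f i).degreeOf 1) (fun _ _ => Nat.zero_le _)
          (by simp [Finset.mem_Ico]; omega)
  -- key: if z-coordinate is 0, f i nonzero for i ≥ 1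
  have key : ∀ P : Fin 2 → K, P 1 = 0 → ∀ i, 1 ≤ i → eval P (f i) ≠ 0 := by
    intro P hP i
    induction i using Nat.strong_induction_on with
    | _ i ih =>
      intro hi1
      rcases eq_or_lt_of_le hi1 with h1 | h2
      · rw [← h1, hf1]
        simp [hP]
      · rw [hf i h2]
        have : eval P (C (a i) * X 1 ^ (d i - 1)) = 0 := by
          have : d i - 1 ≠ 0 := by have := hd2 i h2; omega
          simp [hP, zero_pow this]
        rw [map_add, this, zero_add, map_prod]
        apply Finset.prod_ne_zero_iff.mpr
        intro j hj
        rw [Finset.mem_Ico] at hj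
        exact ih j hj.2 hj.1
  intro i n hi hin P ⟨hzi, hzn⟩
  have hn2 : 2 ≤ n := by omega
  rw [hf n hn2, map_add, map_prod] at hzn
  have hprod : ∏ j ∈ Finset.Ico 1 n, eval P (f j) = 0 :=
    Finset.prod_eq_zero (Finset.mem_Ico.mpr ⟨hi, hin⟩) hzi
  rw [hprod, add_zero] at hzn
  simp only [map_mul, map_pow, eval_C, eval_X] at hzn
  have hP1 : P 1 = 0 := by
    rcases mul_eq_zero.mp hzn with h | h
    · exact absurd h (ha n hn2)
    · exact (pow_eq_zero_iff'.mp h).1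
  exact key P hP1 i hi hzi
end
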